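/- Let A be a set and κ an equivalence relation on A with Δ ⊊ κ ⊊ A × A. Then the set of equivalence relations on A preserved by every function in End(κ) is exactly {Δ, κ, A × A}, where End(κ) is the set of all functions f : A → A preserving κ. -/
import Mathlib


/-- `f` preserves the equivalence relation (setoid) `ρ`. -/
def Preserves {A : Type*} (f : A → A) (ρ : Setoid A) : Prop :=
  ∀ x y : A, ρ.r x y → ρ.r (f x) (f y)

/-- The equivalence relations invariant under all endomorphisms of a nontrivial
equivalence `κ` are exactly `Δ`, `κ` and `∇`. -/
theorem con_end_of_single_equivalence {A : Type*} (κ : Setoid A)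
    (hbot : κ ≠ ⊥) (htop : κ ≠ ⊤) :
    {ρ : Setoid A | ∀ f : A → A, Preserves f κ → Preserves f ρ} =
      {⊥, κ, ⊤} := by
  classical
  ext ρ
  simp only [Set.mem_setOf_eq, Set.mem_insert_iff, Set.mem_singleton_iff]
  constructor
  · intro h
    by_cases hb : ρ = ⊥
    · exact Or.inl hb
    have hex : ∃ u v, ρ.r u v ∧ u ≠ v := by
      by_contra hc
      push_neg at hc
      apply hb
      ext x y
      constructor
      · intro hxy
        by_contra hne
        exact hne (hc x y hxy)
      · rintro rfl; exact ρ.refl x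
    obtain ⟨u, v, huv, hne⟩ := hex
    by_cases hsub : ∀ x y, ρ.r x y → κ.r x y
    · right; left
      ext x y
      constructor
      · exact hsub x y
      · intro hxy
        have hf : Preserves (fun z => if z = v then y else x) κ := by
          intro z w _
          by_cases hz : z = v <;> by_cases hw : w = v <;> simp only [hz, hw, if_true, if_neg, if_pos] <;>
            first
              | exact κ.refl _
              | exact hxy
              | exact κ.symm hxy
        have := h _ hf u v huv
        simpa [if_neg hne] using this
    · push_neg at hsub
      obtain ⟨a, b, hab, hnk⟩ := hsub
      right; right
      ext x y
      constructor
      · intro _; trivial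
      · intro _
        have hf : Preserves (fun z => if κ.r z a then x else y) κ := by
          intro z w hzw
          have : κ.r z a ↔ κ.r w a :=
            ⟨fun hz => κ.trans (κ.symm hzw) hz, fun hw => κ.trans hzw hw⟩
          by_cases hz : κ.r z a
          · show κ.r (if κ.r z a then x else y) (if κ.r w a then x else y)
            rw [if_pos hz, if_pos (this.mp hz)]
          · show κ.r (if κ.r z a then x else y) (if κ.r w a then x else y)
            rw [if_neg hz, if_neg (fun hw => hz (this.mpr hw))]
        have := h _ hf a b hab
        have hb2 : ¬ κ.r b a := fun hh => hnk (κ.symm hh)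
        rw [if_pos (κ.iseqv.refl a), if_neg hb2] at this
        exact this
  · rintro (rfl | rfl | rfl)
    · intro f _ x y hxy
      have : x = y := hxy
      subst this
      rfl
    · intro f hf
      exact hf
    · intro f _ x y _
      trivial
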